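/- arXiv:2404.11678 — 12 statements merged into one kernel-verified Lean document; each statement's English description precedes it below -/
import Mathlib

section
/- Suppose there exists a point Ā ∈ ℝⁿ with 0 < Āᵢ < Nᵢ for every i, 0 < M1 − Σᵢ Āᵢ, and M1 − Σᵢ Āᵢ < n0. Then the GL odds-ratio objective G attains its minimum over the compact set K = {A ∈ ℝⁿ : 0 ≤ Aᵢ ≤ Nᵢ for all i, 0 ≤ M1 − Σᵢ Aᵢ ≤ n0} at exactly one point; that is, G has a unique global minimizer on K. -/
open Finset

/-- The Greenland–Longnecker odds-ratio objective `G`, with the convention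
`0 * log 0 = 0` (which holds for `Real.log` since `Real.log 0 = 0`). -/
noncomputable def glOR_G (n : ℕ) (L N : Fin n → ℝ) (n0 M1 : ℝ) (A : Fin n → ℝ) : ℝ :=
  -(∑ i, L i * A i)
    + ((M1 - ∑ i, A i) * Real.log (M1 - ∑ i, A i) - (M1 - ∑ i, A i))
    + (∑ i, ((N i - A i) * Real.log (N i - A i) - (N i - A i)))
    + (∑ i, (A i * Real.log (A i) - A i))
    + ((n0 - (M1 - ∑ i, A i)) * Real.log (n0 - (M1 - ∑ i, A i))
        - (n0 - (M1 - ∑ i, A i)))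

/-- The feasible compact set `K` for the GL odds-ratio problem. -/
def glOR_K (n : ℕ) (N : Fin n → ℝ) (n0 M1 : ℝ) : Set (Fin n → ℝ) :=
  {A | (∀ i, 0 ≤ A i ∧ A i ≤ N i) ∧ 0 ≤ M1 - ∑ i, A i ∧ M1 - ∑ i, A i ≤ n0}

set_option maxHeartbeats 1600000 in
/-- If there is a strictly feasible point, then the GL odds-ratio objective `G`
attains its minimum over `K` at exactly one point. -/
theorem glOR_unique_global_minimizer
    (n : ℕ) (hn : 1 ≤ n) (L N : Fin n → ℝ) (hN : ∀ i, 0 < N i)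
    (n0 M1 : ℝ) (hn0 : 0 < n0) (hM1 : 0 < M1)
    (hfeas : ∃ Abar : Fin n → ℝ, (∀ i, 0 < Abar i ∧ Abar i < N i) ∧
      0 < M1 - ∑ i, Abar i ∧ M1 - ∑ i, Abar i < n0) :
    ∃! A₀ : Fin n → ℝ, A₀ ∈ glOR_K n N n0 M1 ∧
      ∀ A ∈ glOR_K n N n0 M1, glOR_G n L N n0 M1 A₀ ≤ glOR_G n L N n0 M1 A := by
  obtain ⟨Abar, hAb, hAb0, hAb0'⟩ := hfeas
  set K := glOR_K n N n0 M1 with hKdef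
  set G := glOR_G n L N n0 M1 with hGdef
  -- K is convex
  have hKconv : Convex ℝ K := by
    intro A hA B hB t u ht hu htu
    obtain ⟨h1, h2, h3⟩ := hA
    obtain ⟨h1', h2', h3'⟩ := hB
    have hsum : ∑ i, (t • A + u • B) i = t * ∑ i, A i + u * ∑ i, B i := by
      simp [Finset.sum_add_distrib, Finset.mul_sum]
    refine ⟨fun i => ?_, ?_, ?_⟩
    · have e : (t • A + u • B) i = t * A i + u * B i := by simp
      rw [e]
      constructor
      · have := (h1 i).1; have := (h1' i).1; positivity
      · have ee : t * N i + u * N i = N i := by linear_combination N i * htu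
        linarith [mul_le_mul_of_nonneg_left (h1 i).2 ht,
          mul_le_mul_of_nonneg_left (h1' i).2 hu]
    · rw [hsum]
      have ee : t * M1 + u * M1 = M1 := by linear_combination M1 * htu
      linarith [mul_le_mul_of_nonneg_left h2 ht, mul_le_mul_of_nonneg_left h2' hu]
    · rw [hsum]
      have ee : t * M1 + u * M1 = M1 := by linear_combination M1 * htu
      have ee2 : t * n0 + u * n0 = n0 := by linear_combination n0 * htu
      linarith [mul_le_mul_of_nonneg_left h3 ht, mul_le_mul_of_nonneg_left h3' hu]
  -- K is compact
  have hKcomp : IsCompact K := by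
    have heq : K = (Set.pi Set.univ fun i => Set.Icc (0:ℝ) (N i)) ∩
        ({A : Fin n → ℝ | 0 ≤ M1 - ∑ i, A i} ∩ {A : Fin n → ℝ | M1 - ∑ i, A i ≤ n0}) := by
      ext A
      simp only [hKdef, glOR_K, Set.mem_setOf_eq, Set.mem_inter_iff, Set.mem_pi,
        Set.mem_univ, Set.mem_Icc, forall_const]
    have hc : Continuous fun A : Fin n → ℝ => M1 - ∑ i, A i :=
      continuous_const.sub (continuous_finset_sum _ fun i _ => continuous_apply i)
    rw [heq]
    exact (isCompact_univ_pi fun i => isCompact_Icc).inter_right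
      ((isClosed_le continuous_const hc).inter (isClosed_le hc continuous_const))
  -- G is continuous
  have hml : Continuous fun x : ℝ => x * Real.log x := Real.continuous_mul_log
  have hS : Continuous fun A : Fin n → ℝ => ∑ i, A i :=
    continuous_finset_sum _ fun i _ => continuous_apply i
  have hGc : Continuous G := by
    rw [hGdef]; unfold glOR_G
    refine ((((?_ : Continuous _).add ?_).add ?_).add ?_).add ?_
    · exact (continuous_finset_sum _ fun i _ => continuous_const.mul (continuous_apply i)).neg
    · exact (hml.comp (continuous_const.sub hS)).sub (continuous_const.sub hS)
    · exact continuous_finset_sum _ fun i _ =>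
        (hml.comp (continuous_const.sub (continuous_apply i))).sub
          (continuous_const.sub (continuous_apply i))
    · exact continuous_finset_sum _ fun i _ =>
        (hml.comp (continuous_apply i)).sub (continuous_apply i)
    · exact (hml.comp (continuous_const.sub (continuous_const.sub hS))).sub
        (continuous_const.sub (continuous_const.sub hS))
  -- nonempty
  have hKne : Abar ∈ K := ⟨fun i => ⟨(hAb i).1.le, (hAb i).2.le⟩, hAb0.le, hAb0'.le⟩
  obtain ⟨A₀, hA₀K, hmin⟩ := hKcomp.exists_isMinOn ⟨Abar, hKne⟩ hGc.continuousOn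
  -- strict convexity
  have hstrict : StrictConvexOn ℝ K G := by
    refine ⟨hKconv, ?_⟩
    intro A hA B hB hne t u ht hu htu
    obtain ⟨h1, h2, h3⟩ := hA
    obtain ⟨h1', h2', h3'⟩ := hB
    have hC : ∀ i, (t • A + u • B) i = t * A i + u * B i := fun i => by simp
    have cc := Real.convexOn_mul_log
    have sc := Real.strictConvexOn_mul_log
    have F1 : ∑ i, L i * (t • A + u • B) i
        = t * (∑ i, L i * A i) + u * (∑ i, L i * B i) := by
      rw [Finset.mul_sum, Finset.mul_sum, ← Finset.sum_add_distrib]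
      exact Finset.sum_congr rfl fun i _ => by rw [hC i]; ring
    have F2 : ∑ i, (t • A + u • B) i = t * (∑ i, A i) + u * (∑ i, B i) := by
      rw [Finset.mul_sum, Finset.mul_sum, ← Finset.sum_add_distrib]
      exact Finset.sum_congr rfl fun i _ => by rw [hC i]
    have hNarg : ∀ i, N i - (t • A + u • B) i = t * (N i - A i) + u * (N i - B i) := by
      intro i; rw [hC i]; linear_combination N i * htu.symm
    have F3 : ∑ i, (N i - (t • A + u • B) i) * Real.log (N i - (t • A + u • B) i)
        = ∑ i, (t * (N i - A i) + u * (N i - B i)) *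
            Real.log (t * (N i - A i) + u * (N i - B i)) :=
      Finset.sum_congr rfl fun i _ => by rw [hNarg i]
    have F3b : ∑ i, (N i - (t • A + u • B) i)
        = t * (∑ i, (N i - A i)) + u * (∑ i, (N i - B i)) := by
      rw [Finset.mul_sum, Finset.mul_sum, ← Finset.sum_add_distrib]
      exact Finset.sum_congr rfl fun i _ => hNarg i
    have F4 : ∑ i, (t • A + u • B) i * Real.log ((t • A + u • B) i)
        = ∑ i, (t * A i + u * B i) * Real.log (t * A i + u * B i) :=
      Finset.sum_congr rfl fun i _ => by rw [hC i]
    have hM1' : M1 - (t * (∑ i, A i) + u * (∑ i, B i))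
        = t * (M1 - ∑ i, A i) + u * (M1 - ∑ i, B i) := by linear_combination M1 * htu.symm
    have hb0' : n0 - (t * (M1 - ∑ i, A i) + u * (M1 - ∑ i, B i))
        = t * (n0 - (M1 - ∑ i, A i)) + u * (n0 - (M1 - ∑ i, B i)) := by
      linear_combination n0 * htu.symm
    have I1 : (t * (M1 - ∑ i, A i) + u * (M1 - ∑ i, B i)) *
          Real.log (t * (M1 - ∑ i, A i) + u * (M1 - ∑ i, B i))
        ≤ t * ((M1 - ∑ i, A i) * Real.log (M1 - ∑ i, A i))
          + u * ((M1 - ∑ i, B i) * Real.log (M1 - ∑ i, B i)) := by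
      simpa [smul_eq_mul] using cc.2 (Set.mem_Ici.mpr h2) (Set.mem_Ici.mpr h2')
        ht.le hu.le htu
    have I2 : ∑ i, (t * (N i - A i) + u * (N i - B i)) *
          Real.log (t * (N i - A i) + u * (N i - B i))
        ≤ t * (∑ i, (N i - A i) * Real.log (N i - A i))
          + u * (∑ i, (N i - B i) * Real.log (N i - B i)) := by
      rw [Finset.mul_sum, Finset.mul_sum, ← Finset.sum_add_distrib]
      refine Finset.sum_le_sum fun i _ => ?_
      simpa [smul_eq_mul] using cc.2 (Set.mem_Ici.mpr (sub_nonneg.mpr (h1 i).2))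
        (Set.mem_Ici.mpr (sub_nonneg.mpr (h1' i).2)) ht.le hu.le htu
    have hj : ∃ j, A j ≠ B j := by
      by_contra h; push_neg at h; exact hne (funext h)
    obtain ⟨j, hj⟩ := hj
    have I3 : ∑ i, (t * A i + u * B i) * Real.log (t * A i + u * B i)
        < t * (∑ i, A i * Real.log (A i)) + u * (∑ i, B i * Real.log (B i)) := by
      rw [Finset.mul_sum, Finset.mul_sum, ← Finset.sum_add_distrib]
      refine Finset.sum_lt_sum (fun i _ => ?_) ⟨j, Finset.mem_univ j, ?_⟩
      · simpa [smul_eq_mul] using cc.2 (Set.mem_Ici.mpr (h1 i).1)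
          (Set.mem_Ici.mpr (h1' i).1) ht.le hu.le htu
      · simpa [smul_eq_mul] using sc.2 (Set.mem_Ici.mpr (h1 j).1)
          (Set.mem_Ici.mpr (h1' j).1) hj ht hu htu
    have I4 : (t * (n0 - (M1 - ∑ i, A i)) + u * (n0 - (M1 - ∑ i, B i))) *
          Real.log (t * (n0 - (M1 - ∑ i, A i)) + u * (n0 - (M1 - ∑ i, B i)))
        ≤ t * ((n0 - (M1 - ∑ i, A i)) * Real.log (n0 - (M1 - ∑ i, A i)))
          + u * ((n0 - (M1 - ∑ i, B i)) * Real.log (n0 - (M1 - ∑ i, B i))) := by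
      simpa [smul_eq_mul] using cc.2 (Set.mem_Ici.mpr (sub_nonneg.mpr h3))
        (Set.mem_Ici.mpr (sub_nonneg.mpr h3')) ht.le hu.le htu
    show G (t • A + u • B) < t • G A + u • G B
    rw [hGdef]
    simp only [glOR_G, smul_eq_mul, Finset.sum_sub_distrib]
    rw [F1, F3, F4, F2, hM1', hb0']
    have hNe : t * (∑ i, N i) + u * (∑ i, N i) = ∑ i, N i := by
      linear_combination (∑ i, N i) * htu
    linarith [I1, I2, I3, I4, hNe]
  refine ⟨A₀, ⟨hA₀K, fun A hA => hmin hA⟩, ?_⟩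
  rintro A' ⟨hA'K, hA'min⟩
  exact hstrict.eq_of_isMinOn (isMinOn_iff.mpr fun y hy => hA'min y hy) hmin hA'K hA₀K
end

section
/- The GL odds-ratio objective G is strictly convex on the convex open set U = {A ∈ ℝⁿ : 0 < Aᵢ < Nᵢ for all i, 0 < M1 − Σᵢ Aᵢ < n0}; that is, for all A₁ ≠ A₂ in U and all λ ∈ (0,1), G(λA₁ + (1−λ)A₂) < λG(A₁) + (1−λ)G(A₂). -/
open Finset

noncomputable def glphi (x : ℝ) : ℝ := x * Real.log x - x

lemma glphi_convex {x y l : ℝ} (hx : 0 < x) (hy : 0 < y) (hl : 0 < l) (hl1 : l < 1) :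
    glphi (l * x + (1 - l) * y) ≤ l * glphi x + (1 - l) * glphi y := by
  have h := Real.convexOn_mul_log.2 (Set.mem_Ici.2 hx.le) (Set.mem_Ici.2 hy.le)
    hl.le (by linarith : (0:ℝ) ≤ 1 - l) (by ring)
  simp only [smul_eq_mul] at h
  simp only [glphi]
  nlinarith [h]

lemma glphi_strict {x y l : ℝ} (hx : 0 < x) (hy : 0 < y) (hxy : x ≠ y)
    (hl : 0 < l) (hl1 : l < 1) :
    glphi (l * x + (1 - l) * y) < l * glphi x + (1 - l) * glphi y := by
  have h := Real.strictConvexOn_mul_log.2 (Set.mem_Ici.2 hx.le) (Set.mem_Ici.2 hy.le)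
    hxy hl (by linarith : (0:ℝ) < 1 - l) (by ring)
  simp only [smul_eq_mul] at h
  simp only [glphi]
  nlinarith [h]

/-- The open feasible set `U` for the GL odds-ratio problem. -/
def glOR_U (n : ℕ) (N : Fin n → ℝ) (n0 M1 : ℝ) : Set (Fin n → ℝ) :=
  {A | (∀ i, 0 < A i ∧ A i < N i) ∧ 0 < M1 - ∑ i, A i ∧ M1 - ∑ i, A i < n0}

lemma glOR_G_eq (n : ℕ) (L N : Fin n → ℝ) (n0 M1 : ℝ) (A : Fin n → ℝ) :
    glOR_G n L N n0 M1 A =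
      -(∑ i, L i * A i) + glphi (M1 - ∑ i, A i)
        + (∑ i, glphi (N i - A i)) + (∑ i, glphi (A i))
        + glphi (n0 - (M1 - ∑ i, A i)) := by
  simp [glOR_G, glphi]

/-- The GL odds-ratio objective `G` is strictly convex on the open feasible set `U`. -/
theorem glOR_strictly_convex
    (n : ℕ) (hn : 1 ≤ n) (L N : Fin n → ℝ) (hN : ∀ i, 0 < N i)
    (n0 M1 : ℝ) (hn0 : 0 < n0) (hM1 : 0 < M1) :
    ∀ A₁ ∈ glOR_U n N n0 M1, ∀ A₂ ∈ glOR_U n N n0 M1, A₁ ≠ A₂ →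
      ∀ l : ℝ, 0 < l → l < 1 →
        glOR_G n L N n0 M1 (l • A₁ + (1 - l) • A₂)
          < l * glOR_G n L N n0 M1 A₁ + (1 - l) * glOR_G n L N n0 M1 A₂ := by
  rintro A₁ ⟨hA₁, ha₁, hb₁⟩ A₂ ⟨hA₂, ha₂, hb₂⟩ hne l hl hl1
  set z : Fin n → ℝ := l • A₁ + (1 - l) • A₂ with hzdef
  have hz : ∀ i, z i = l * A₁ i + (1 - l) * A₂ i := by
    intro i; simp [hzdef, smul_eq_mul]
  have hzsum : ∑ i, z i = l * ∑ i, A₁ i + (1 - l) * ∑ i, A₂ i := by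
    simp only [hz]; rw [Finset.sum_add_distrib, Finset.mul_sum, Finset.mul_sum]
  -- linear term
  have hL : ∑ i, L i * z i = l * ∑ i, L i * A₁ i + (1 - l) * ∑ i, L i * A₂ i := by
    simp only [hz]; rw [Finset.mul_sum, Finset.mul_sum, ← Finset.sum_add_distrib]
    exact Finset.sum_congr rfl fun i _ => by ring
  -- a0 term
  have ha0 : M1 - ∑ i, z i = l * (M1 - ∑ i, A₁ i) + (1 - l) * (M1 - ∑ i, A₂ i) := by
    rw [hzsum]; ring
  have h1 : glphi (M1 - ∑ i, z i)
      ≤ l * glphi (M1 - ∑ i, A₁ i) + (1 - l) * glphi (M1 - ∑ i, A₂ i) := by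
    rw [ha0]; exact glphi_convex ha₁ ha₂ hl hl1
  -- b0 term
  have hb0 : n0 - (M1 - ∑ i, z i)
      = l * (n0 - (M1 - ∑ i, A₁ i)) + (1 - l) * (n0 - (M1 - ∑ i, A₂ i)) := by
    rw [hzsum]; ring
  have h4 : glphi (n0 - (M1 - ∑ i, z i))
      ≤ l * glphi (n0 - (M1 - ∑ i, A₁ i)) + (1 - l) * glphi (n0 - (M1 - ∑ i, A₂ i)) := by
    rw [hb0]
    exact glphi_convex (by linarith) (by linarith) hl hl1
  -- B terms
  have h2 : ∑ i, glphi (N i - z i)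
      ≤ l * ∑ i, glphi (N i - A₁ i) + (1 - l) * ∑ i, glphi (N i - A₂ i) := by
    rw [Finset.mul_sum, Finset.mul_sum, ← Finset.sum_add_distrib]
    refine Finset.sum_le_sum fun i _ => ?_
    have : N i - z i = l * (N i - A₁ i) + (1 - l) * (N i - A₂ i) := by
      rw [hz]; ring
    rw [this]
    exact glphi_convex (by linarith [(hA₁ i).2]) (by linarith [(hA₂ i).2]) hl hl1
  -- A terms: strict at some index
  obtain ⟨j, hj⟩ : ∃ j, A₁ j ≠ A₂ j := by
    by_contra h
    push_neg at h
    exact hne (funext h)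
  have h3 : ∑ i, glphi (z i)
      < l * ∑ i, glphi (A₁ i) + (1 - l) * ∑ i, glphi (A₂ i) := by
    rw [Finset.mul_sum, Finset.mul_sum, ← Finset.sum_add_distrib]
    refine Finset.sum_lt_sum (fun i _ => ?_) ⟨j, Finset.mem_univ j, ?_⟩
    · rw [hz]
      exact glphi_convex (hA₁ i).1 (hA₂ i).1 hl hl1
    · rw [hz]
      exact glphi_strict (hA₁ j).1 (hA₂ j).1 hj hl hl1
  rw [glOR_G_eq, glOR_G_eq, glOR_G_eq]
  nlinarith [h1, h2, h3, h4, hL]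
end

section
/- Suppose M1 > 0, so that there exists A ∈ ℝⁿ with Aᵢ > 0 for all i and Σᵢ Aᵢ < M1, and suppose the entries of R are finite real numbers. Then the GL relative-risk objective H attains its minimum over the set K' = {A ∈ ℝⁿ : Aᵢ ≥ 0 for all i, Σᵢ Aᵢ ≤ M1} at exactly one point; that is, H has a unique global minimizer on K'. -/
/-!
`x ↦ x log x - x` is strictly convex and continuous on `[0, ∞)`. The objective `H` is a linear
function plus this function applied to each coordinate `Aᵢ` and to the slack `M1 - ∑ Aᵢ`, so it is
continuous and strictly convex on the compact convex set `K'`, which contains `0`. A minimizer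
therefore exists, and two distinct ones would give a strictly smaller value at their midpoint.
-/

open Finset

/-- The Greenland–Longnecker relative-risk objective `H`, with the convention
`0 * log 0 = 0` (which holds for `Real.log` since `Real.log 0 = 0`). -/
noncomputable def glRR_H (n : ℕ) (R N : Fin n → ℝ) (n0 M1 : ℝ) (A : Fin n → ℝ) : ℝ :=
  (∑ i, A i * (-R i - Real.log (N i) + Real.log n0))
    + (∑ i, (A i * Real.log (A i) - A i))
    + ((M1 - ∑ i, A i) * Real.log (M1 - ∑ i, A i) - (M1 - ∑ i, A i))

/-- The feasible set `K'` for the GL relative-risk problem. -/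
def glRR_K (n : ℕ) (M1 : ℝ) : Set (Fin n → ℝ) :=
  {A | (∀ i, 0 ≤ A i) ∧ ∑ i, A i ≤ M1}

open Real

theorem StrictConvexOn.existsUnique_isMinOn_of_isCompact {𝕜 E β : Type*}
    [Field 𝕜] [LinearOrder 𝕜] [IsStrictOrderedRing 𝕜]
    [AddCommMonoid E] [SMul 𝕜 E] [TopologicalSpace E]
    [AddCommMonoid β] [LinearOrder β] [IsOrderedAddMonoid β] [Module 𝕜 β] [PosSMulMono 𝕜 β]
    [TopologicalSpace β] [ClosedIicTopology β] {s : Set E} {f : E → β}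
    (hf : StrictConvexOn 𝕜 s f) (hfc : ContinuousOn f s) (hs : IsCompact s) (hne : s.Nonempty) :
    ∃! x, x ∈ s ∧ ∀ y ∈ s, f x ≤ f y := by
  obtain ⟨x, hx, hmin⟩ := hs.exists_isMinOn hne hfc
  exact ⟨x, ⟨hx, hmin⟩, fun y ⟨hy, hymin⟩ => hf.eq_of_isMinOn hymin hmin hy hx⟩

theorem StrictConvexOn.sum_comp_apply {𝕜 E β ι : Type*} [Fintype ι]
    [Semiring 𝕜] [PartialOrder 𝕜] [AddCommMonoid E] [Module 𝕜 E]
    [AddCommMonoid β] [PartialOrder β] [IsOrderedCancelAddMonoid β] [Module 𝕜 β]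
    {s : Set E} {f : E → β} (hf : StrictConvexOn 𝕜 s f) :
    StrictConvexOn 𝕜 (Set.univ.pi fun _ : ι => s) (fun x => ∑ i, f (x i)) := by
  refine ⟨convex_pi fun i _ => hf.1, fun x hx y hy hxy a b ha hb hab => ?_⟩
  obtain ⟨j, hj⟩ := Function.ne_iff.mp hxy
  simp only [Finset.smul_sum, ← Finset.sum_add_distrib]
  refine Finset.sum_lt_sum (fun i _ => ?_) ⟨j, mem_univ j, ?_⟩
  · exact hf.convexOn.2 (hx i trivial) (hy i trivial) ha.le hb.le hab
  · exact hf.2 (hx j trivial) (hy j trivial) hj ha hb hab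

theorem strictConvexOn_mul_log_sub_self :
    StrictConvexOn ℝ (Set.Ici 0) (fun x => x * log x - x) :=
  strictConvexOn_mul_log.sub_concaveOn (concaveOn_id (convex_Ici 0))

theorem isLinearMap_sum_apply (R ι : Type*) [Semiring R] [Fintype ι] :
    IsLinearMap R fun x : ι → R => ∑ i, x i :=
  ⟨fun _ _ => sum_add_distrib, fun _ _ => (mul_sum ..).symm⟩

section

variable (n : ℕ) (M1 : ℝ)

theorem glRR_K_eq :
    glRR_K n M1 = (Set.univ.pi fun _ => Set.Ici 0) ∩ {A | ∑ i, A i ≤ M1} := by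
  ext A; simp [glRR_K, Pi.le_def]

theorem zero_mem_glRR_K (hM1 : 0 ≤ M1) : 0 ∈ glRR_K n M1 :=
  ⟨fun _ => le_rfl, by simpa using hM1⟩

theorem glRR_K_convex : Convex ℝ (glRR_K n M1) := by
  rw [glRR_K_eq]
  exact (convex_pi fun _ _ => convex_Ici 0).inter
    (convex_halfSpace_le (isLinearMap_sum_apply ℝ (Fin n)) M1)

theorem glRR_K_isCompact : IsCompact (glRR_K n M1) := by
  refine isCompact_Icc.of_isClosed_subset ?_
    (fun A hA => ?_ : glRR_K n M1 ⊆ Set.Icc 0 fun _ => M1)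
  · rw [glRR_K_eq]
    exact (isClosed_set_pi fun _ _ => isClosed_Ici).inter
      (isClosed_le (by fun_prop) continuous_const)
  · exact ⟨hA.1, fun i => (single_le_sum (fun j _ => hA.1 j) (mem_univ i)).trans hA.2⟩

variable (R N : Fin n → ℝ) (n0 : ℝ)

theorem glRR_H_continuous : Continuous (glRR_H n R N n0 M1) := by
  have hmul_log := continuous_mul_log
  unfold glRR_H
  fun_prop

theorem glRR_H_strictConvexOn : StrictConvexOn ℝ (glRR_K n M1) (glRR_H n R N n0 M1) := by
  have hK := glRR_K_convex n M1
  have hlin : ConvexOn ℝ (glRR_K n M1) fun A => ∑ i, A i * (-R i - log (N i) + log n0) :=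
    (Fintype.linearCombination ℝ fun i => -R i - log (N i) + log n0).convexOn hK
  have hcoord : StrictConvexOn ℝ (glRR_K n M1) fun A => ∑ i, (A i * log (A i) - A i) :=
    strictConvexOn_mul_log_sub_self.sum_comp_apply.subset
      (glRR_K_eq n M1 ▸ Set.inter_subset_left) hK
  let slack : (Fin n → ℝ) →ᵃ[ℝ] ℝ :=
    AffineMap.const ℝ _ M1 - (IsLinearMap.mk' _ (isLinearMap_sum_apply ℝ (Fin n))).toAffineMap
  have hslack : ConvexOn ℝ (glRR_K n M1) fun A =>
      (M1 - ∑ i, A i) * log (M1 - ∑ i, A i) - (M1 - ∑ i, A i) :=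
    (strictConvexOn_mul_log_sub_self.convexOn.comp_affineMap slack).subset
      (fun _ hA => sub_nonneg.2 hA.2) hK
  exact (hlin.add_strictConvexOn hcoord).add_convexOn hslack

end

theorem glRR_unique_global_minimizer_general
    (n : ℕ) (R N : Fin n → ℝ)
    (n0 M1 : ℝ) (hM1 : 0 < M1) :
    ∃! A₀ : Fin n → ℝ, A₀ ∈ glRR_K n M1 ∧
      ∀ A ∈ glRR_K n M1, glRR_H n R N n0 M1 A₀ ≤ glRR_H n R N n0 M1 A :=
  (glRR_H_strictConvexOn n M1 R N n0).existsUnique_isMinOn_of_isCompact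
    (glRR_H_continuous n M1 R N n0).continuousOn (glRR_K_isCompact n M1)
    ⟨0, zero_mem_glRR_K n M1 hM1.le⟩

/-- If `M1 > 0` (so a strictly feasible point exists) and the reported log relative risks
are (finite) real numbers, the GL relative-risk objective `H` attains its minimum over
`K'` at exactly one point. -/
theorem glRR_unique_global_minimizer
    (n : ℕ) (hn : 1 ≤ n) (R N : Fin n → ℝ) (hN : ∀ i, 0 < N i)
    (n0 M1 : ℝ) (hn0 : 0 < n0) (hM1 : 0 < M1)
    (hfeas : ∃ A : Fin n → ℝ, (∀ i, 0 < A i) ∧ ∑ i, A i < M1) :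
    ∃! A₀ : Fin n → ℝ, A₀ ∈ glRR_K n M1 ∧
      ∀ A ∈ glRR_K n M1, glRR_H n R N n0 M1 A₀ ≤ glRR_H n R N n0 M1 A :=
  glRR_unique_global_minimizer_general n R N n0 M1 hM1
end

section
/- The GL relative-risk objective H is strictly convex on the convex open set U' = {A ∈ ℝⁿ : Aᵢ > 0 for all i, Σᵢ Aᵢ < M1}; that is, for all A₁ ≠ A₂ in U' and all λ ∈ (0,1), H(λA₁ + (1−λ)A₂) < λH(A₁) + (1−λ)H(A₂). -/
open Finset

/-- The open feasible set `U'` for the GL relative-risk problem. -/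
def glRR_U (n : ℕ) (M1 : ℝ) : Set (Fin n → ℝ) :=
  {A | (∀ i, 0 < A i) ∧ ∑ i, A i < M1}

/-- The GL relative-risk objective `H` is strictly convex on the open feasible set `U'`. -/
theorem glRR_strictly_convex
    (n : ℕ) (hn : 1 ≤ n) (R N : Fin n → ℝ) (hN : ∀ i, 0 < N i)
    (n0 M1 : ℝ) (hn0 : 0 < n0) (hM1 : 0 < M1) :
    ∀ A₁ ∈ glRR_U n M1, ∀ A₂ ∈ glRR_U n M1, A₁ ≠ A₂ →
      ∀ l : ℝ, 0 < l → l < 1 →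
        glRR_H n R N n0 M1 (l • A₁ + (1 - l) • A₂)
          < l * glRR_H n R N n0 M1 A₁ + (1 - l) * glRR_H n R N n0 M1 A₂ := by
  intro A₁ hA₁ A₂ hA₂ hne l hl hl1
  obtain ⟨h1pos, h1sum⟩ := hA₁
  obtain ⟨h2pos, h2sum⟩ := hA₂
  set f : ℝ → ℝ := fun x => x * Real.log x with hf
  have hsc : StrictConvexOn ℝ (Set.Ici (0:ℝ)) f := Real.strictConvexOn_mul_log
  have hl1' : (0:ℝ) ≤ 1 - l := by linarith
  have hll : l + (1 - l) = 1 := by ring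
  have hcv : ∀ x y : ℝ, 0 ≤ x → 0 ≤ y →
      f (l * x + (1 - l) * y) ≤ l * f x + (1 - l) * f y := fun x y hx hy =>
    hsc.convexOn.2 hx hy hl.le hl1' hll
  have hcvs : ∀ x y : ℝ, 0 ≤ x → 0 ≤ y → x ≠ y →
      f (l * x + (1 - l) * y) < l * f x + (1 - l) * f y := fun x y hx hy hxy =>
    hsc.2 hx hy hxy hl (by linarith) hll
  obtain ⟨i₀, hi₀⟩ := Function.ne_iff.mp hne
  set B : Fin n → ℝ := l • A₁ + (1 - l) • A₂ with hB
  have hBi : ∀ i, B i = l * A₁ i + (1 - l) * A₂ i := fun i => rfl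
  have hBsum : ∑ i, B i = l * ∑ i, A₁ i + (1 - l) * ∑ i, A₂ i := by
    simp only [hBi, Finset.sum_add_distrib, Finset.mul_sum]
  set c : Fin n → ℝ := fun i => -R i - Real.log (N i) + Real.log n0 with hc
  have key1 : ∑ i, f (B i) < l * ∑ i, f (A₁ i) + (1 - l) * ∑ i, f (A₂ i) := by
    rw [Finset.mul_sum, Finset.mul_sum, ← Finset.sum_add_distrib]
    refine Finset.sum_lt_sum (fun i _ => ?_) ⟨i₀, Finset.mem_univ i₀, ?_⟩
    · rw [hBi]; exact hcv _ _ (h1pos i).le (h2pos i).le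
    · rw [hBi]; exact hcvs _ _ (h1pos i₀).le (h2pos i₀).le hi₀
  have key2 : f (M1 - ∑ i, B i)
      ≤ l * f (M1 - ∑ i, A₁ i) + (1 - l) * f (M1 - ∑ i, A₂ i) := by
    have h : M1 - ∑ i, B i
        = l * (M1 - ∑ i, A₁ i) + (1 - l) * (M1 - ∑ i, A₂ i) := by
      rw [hBsum]; ring
    rw [h]
    exact hcv _ _ (by linarith) (by linarith)
  have keylin : ∑ i, B i * c i = l * ∑ i, A₁ i * c i + (1 - l) * ∑ i, A₂ i * c i := by
    simp only [hBi, Finset.mul_sum, ← Finset.sum_add_distrib]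
    exact Finset.sum_congr rfl fun i _ => by ring
  have keyfB : ∑ i, (B i * Real.log (B i) - B i) = (∑ i, f (B i)) - ∑ i, B i := by
    rw [Finset.sum_sub_distrib]
  have keyfA1 : ∑ i, (A₁ i * Real.log (A₁ i) - A₁ i) = (∑ i, f (A₁ i)) - ∑ i, A₁ i := by
    rw [Finset.sum_sub_distrib]
  have keyfA2 : ∑ i, (A₂ i * Real.log (A₂ i) - A₂ i) = (∑ i, f (A₂ i)) - ∑ i, A₂ i := by
    rw [Finset.sum_sub_distrib]
  show (∑ i, B i * c i) + (∑ i, (B i * Real.log (B i) - B i))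
      + ((M1 - ∑ i, B i) * Real.log (M1 - ∑ i, B i) - (M1 - ∑ i, B i))
      < l * ((∑ i, A₁ i * c i) + (∑ i, (A₁ i * Real.log (A₁ i) - A₁ i))
          + ((M1 - ∑ i, A₁ i) * Real.log (M1 - ∑ i, A₁ i) - (M1 - ∑ i, A₁ i)))
        + (1 - l) * ((∑ i, A₂ i * c i) + (∑ i, (A₂ i * Real.log (A₂ i) - A₂ i))
          + ((M1 - ∑ i, A₂ i) * Real.log (M1 - ∑ i, A₂ i) - (M1 - ∑ i, A₂ i)))
  have hfB : (M1 - ∑ i, B i) * Real.log (M1 - ∑ i, B i) = f (M1 - ∑ i, B i) := rfl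
  have hfA1 : (M1 - ∑ i, A₁ i) * Real.log (M1 - ∑ i, A₁ i) = f (M1 - ∑ i, A₁ i) := rfl
  have hfA2 : (M1 - ∑ i, A₂ i) * Real.log (M1 - ∑ i, A₂ i) = f (M1 - ∑ i, A₂ i) := rfl
  rw [hBsum] at key2
  rw [keyfB, keyfA1, keyfA2, keylin, hfB, hfA1, hfA2, hBsum]
  nlinarith [key1, key2]
end

section
/- Suppose all reported variances are equal: Vᵢ = v for a scalar v > 0 and all i. Set c = (npz − nz + n − p·r1·z + √D)/(2z(np + (1−p)r2)), b0 = (1/v)·((p/(1−p))(n + r1/c) + 1 + 1/c), and a0 = c·b0. Then a0 > 0, b0 > 0, v − 1/a0 − 1/b0 > 0, the pair (a0, b0) satisfies the Hamling odds-ratio system, and it is the unique pair with a0 > 0, b0 > 0 and v − 1/a0 − 1/b0 > 0 satisfying that system. -/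
/-!
With all variances equal to `v`, the two sums collapse to expressions in `r1 = ∑ 1/Rᵢ` and
`r2 = ∑ Rᵢ`. For `a, b > 0`, clearing denominators turns the first equation into the bilinear
relation `v(1-p)ab = p(na + r1 b) + (1-p)(a + b)`, which in turn forces `v - 1/a - 1/b > 0`.
Given it, the second equation becomes the homogeneous quadratic `A a² + B ab = r1 b²` with
`A = z(np + (1-p)r2) > 0` and `B = nz - npz - n + p r1 z`, whose discriminant is `D`. As
`r1 > 0`, `A x² + B x = r1` has exactly one positive root `c`, so `a = c b`, and the bilinear
relation then becomes linear in `b`, with unique solution `b0`.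
-/

open Finset

/-- The Hamling odds-ratio system of nonlinear equations in the unknowns `(a0, b0)`. -/
def hamlingORSystem (n : ℕ) (V R : Fin n → ℝ) (p z : ℝ) (a0 b0 : ℝ) : Prop :=
  ((1 - p) / p) * b0 = ∑ i, (1 + b0 / (a0 * R i)) / (V i - 1 / a0 - 1 / b0) ∧
  b0 / (z * p) - a0 = ∑ i, (1 + a0 * R i / b0) / (V i - 1 / a0 - 1 / b0)

theorem hamlingORSystem_iff_of_forall_eq {n : ℕ} {V R : Fin n → ℝ} {v : ℝ} (hV : ∀ i, V i = v)
    (p z a b : ℝ) :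
    hamlingORSystem n V R p z a b ↔
      (1 - p) / p * b = (n + b / a * ∑ i, (R i)⁻¹) / (v - 1 / a - 1 / b) ∧
      b / (z * p) - a = (n + a / b * ∑ i, R i) / (v - 1 / a - 1 / b) := by
  have hR (i : Fin n) : b / (a * R i) = b / a * (R i)⁻¹ := by
    rw [div_mul_eq_div_div, div_eq_mul_inv]
  simp only [hamlingORSystem, hV, hR, mul_div_right_comm a, ← sum_div, sum_add_distrib, ← mul_sum,
    sum_const, card_univ, Fintype.card_fin, nsmul_eq_mul, mul_one]

theorem quadratic_root_pos {A B r x : ℝ} (hA : 0 < A) (hr : 0 < r)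
    (hx : x = (-B + √(B ^ 2 + 4 * A * r)) / (2 * A)) : 0 < x ∧ A * x ^ 2 + B * x = r := by
  set s := √(B ^ 2 + 4 * A * r)
  have hs : discrim A B (-r) = s * s := by
    rw [← sq, Real.sq_sqrt (by positivity), discrim]; ring
  have hBs : B < s :=
    (le_abs_self B).trans_lt ((Real.lt_sqrt (abs_nonneg B)).2 (by rw [sq_abs]; nlinarith))
  refine ⟨hx ▸ div_pos (by linarith) (by positivity), ?_⟩
  linear_combination (quadratic_eq_zero_iff hA.ne' hs x).2 (Or.inl hx)

theorem eq_mul_iff_of_quadratic {A B r c a b : ℝ} (hA : 0 < A) (hr : 0 < r) (hc : 0 < c)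
    (hcr : A * c ^ 2 + B * c = r) (ha : 0 < a) (hb : 0 < b) :
    A * a ^ 2 + B * a * b = r * b ^ 2 ↔ a = c * b := by
  have hfac : A * a ^ 2 + B * a * b - r * b ^ 2 = (a - c * b) * (A * (a + c * b) + B * b) := by
    rw [← hcr]; ring
  have hpos : 0 < A * (a + c * b) + B * b := by
    have : c * (A * (a + c * b) + B * b) = A * c * a + r * b := by rw [← hcr]; ring
    have : 0 < c * (A * (a + c * b) + B * b) := by rw [this]; positivity
    exact pos_of_mul_pos_right this hc.le
  rw [← sub_eq_zero, hfac, mul_eq_zero, sub_eq_zero, or_iff_left hpos.ne']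

section
variable {n : ℕ} {r₁ r₂ v p z a b c : ℝ}

theorem hamlingOR_slack_eq_of_bilinear (hp1 : p < 1) (ha : a ≠ 0) (hb : b ≠ 0)
    (h : v * (1 - p) * a * b = p * (n * a + r₁ * b) + (1 - p) * (a + b)) :
    v - 1 / a - 1 / b = p * (n * a + r₁ * b) / ((1 - p) * a * b) := by
  have : 1 - p ≠ 0 := (sub_pos.2 hp1).ne'
  field_simp
  linear_combination h

theorem hamlingOR_first_iff_bilinear (hp0 : 0 < p) (hp1 : p < 1) (hr₁ : 0 < r₁) (ha : 0 < a)
    (hb : 0 < b) :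
    (1 - p) / p * b = (n + b / a * r₁) / (v - 1 / a - 1 / b) ↔
      v * (1 - p) * a * b = p * (n * a + r₁ * b) + (1 - p) * (a + b) := by
  have hq : 0 < 1 - p := sub_pos.2 hp1
  constructor
  · intro h
    have hS : v - 1 / a - 1 / b ≠ 0 := by
      rintro hS
      rw [hS, div_zero] at h
      exact (by positivity : (0 : ℝ) < (1 - p) / p * b).ne' h
    rw [eq_div_iff hS] at h
    field_simp at h
    linear_combination h
  · intro h
    rw [hamlingOR_slack_eq_of_bilinear hp1 ha.ne' hb.ne' h]
    field_simp

theorem hamlingOR_second_iff_quadratic (hp0 : 0 < p) (hp1 : p < 1) (hz : 0 < z) (hr₁ : 0 < r₁)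
    (ha : 0 < a) (hb : 0 < b) (h : v * (1 - p) * a * b = p * (n * a + r₁ * b) + (1 - p) * (a + b)) :
    b / (z * p) - a = (n + a / b * r₂) / (v - 1 / a - 1 / b) ↔
      z * (n * p + (1 - p) * r₂) * a ^ 2 + (n * z - n * p * z - n + p * r₁ * z) * a * b
        = r₁ * b ^ 2 := by
  have hq : 0 < 1 - p := sub_pos.2 hp1
  have : 0 < n * a + r₁ * b := by positivity
  rw [hamlingOR_slack_eq_of_bilinear hp1 ha.ne' hb.ne' h]
  field_simp
  constructor <;> intro h <;> linear_combination -h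

theorem hamlingOR_bilinear_mul_iff (hv : 0 < v) (hp1 : p < 1) (hc : 0 < c) (hb : 0 < b) :
    v * (1 - p) * (c * b) * b = p * (n * (c * b) + r₁ * b) + (1 - p) * (c * b + b) ↔
      b = 1 / v * (p / (1 - p) * (n + r₁ / c) + 1 + 1 / c) := by
  have hq : 1 - p ≠ 0 := (sub_pos.2 hp1).ne'
  field_simp
  constructor <;> intro h <;> linear_combination h

theorem hamlingOR_reduced_iff (hp0 : 0 < p) (hp1 : p < 1) (hz : 0 < z) (hr₁ : 0 < r₁)
    (ha : 0 < a) (hb : 0 < b) :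
    (0 < v - 1 / a - 1 / b ∧
        (1 - p) / p * b = (n + b / a * r₁) / (v - 1 / a - 1 / b) ∧
        b / (z * p) - a = (n + a / b * r₂) / (v - 1 / a - 1 / b)) ↔
      v * (1 - p) * a * b = p * (n * a + r₁ * b) + (1 - p) * (a + b) ∧
        z * (n * p + (1 - p) * r₂) * a ^ 2 + (n * z - n * p * z - n + p * r₁ * z) * a * b
          = r₁ * b ^ 2 := by
  constructor
  · rintro ⟨-, h₁, h₂⟩
    have h := (hamlingOR_first_iff_bilinear hp0 hp1 hr₁ ha hb).1 h₁
    exact ⟨h, (hamlingOR_second_iff_quadratic hp0 hp1 hz hr₁ ha hb h).1 h₂⟩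
  · rintro ⟨h, hq⟩
    have : 0 < 1 - p := sub_pos.2 hp1
    refine ⟨?_, (hamlingOR_first_iff_bilinear hp0 hp1 hr₁ ha hb).2 h,
      (hamlingOR_second_iff_quadratic hp0 hp1 hz hr₁ ha hb h).2 hq⟩
    rw [hamlingOR_slack_eq_of_bilinear hp1 ha.ne' hb.ne' h]
    positivity

end

/-- Equivariant case of the Hamling odds-ratio problem (all variances equal to `v > 0`):
the explicitly given pair `(a0, b0)` is positive, feasible, solves the Hamling system,
and is the unique positive feasible solution. -/
theorem hamlingOR_equivariant
    (n : ℕ) (hn : 1 ≤ n) (V R : Fin n → ℝ) (hR : ∀ i, 0 < R i)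
    (v : ℝ) (hv : 0 < v) (hV : ∀ i, V i = v)
    (p z : ℝ) (hp0 : 0 < p) (hp1 : p < 1) (hz : 0 < z)
    (r1 r2 D c b0 a0 : ℝ)
    (hr1 : r1 = ∑ i, (R i)⁻¹) (hr2 : r2 = ∑ i, R i)
    (hD : D = (n : ℝ) ^ 2 * p ^ 2 * z ^ 2 - 2 * (n : ℝ) ^ 2 * p * z ^ 2
      + 2 * (n : ℝ) ^ 2 * p * z + (n : ℝ) ^ 2 * z ^ 2 - 2 * (n : ℝ) ^ 2 * z + (n : ℝ) ^ 2
      - 2 * (n : ℝ) * p ^ 2 * r1 * z ^ 2 + 2 * (n : ℝ) * p * r1 * z ^ 2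
      + 2 * (n : ℝ) * p * r1 * z + p ^ 2 * r1 ^ 2 * z ^ 2
      - 4 * p * r1 * r2 * z + 4 * r1 * r2 * z)
    (hc : c = ((n : ℝ) * p * z - (n : ℝ) * z + (n : ℝ) - p * r1 * z + Real.sqrt D)
      / (2 * z * ((n : ℝ) * p + (1 - p) * r2)))
    (hb0 : b0 = (1 / v) * ((p / (1 - p)) * ((n : ℝ) + r1 / c) + 1 + 1 / c))
    (ha0 : a0 = c * b0) :
    0 < a0 ∧ 0 < b0 ∧ 0 < v - 1 / a0 - 1 / b0 ∧
      hamlingORSystem n V R p z a0 b0 ∧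
      ∀ a0' b0' : ℝ, 0 < a0' → 0 < b0' → 0 < v - 1 / a0' - 1 / b0' →
        hamlingORSystem n V R p z a0' b0' → a0' = a0 ∧ b0' = b0 := by
  have hne : (univ : Finset (Fin n)).Nonempty := ⟨⟨0, hn⟩, mem_univ _⟩
  have hr₁ : 0 < r1 := hr1 ▸ sum_pos (fun i _ => inv_pos.2 (hR i)) hne
  have hr₂ : 0 < r2 := hr2 ▸ sum_pos (fun i _ => hR i) hne
  have hq : 0 < 1 - p := sub_pos.2 hp1
  set A := z * (n * p + (1 - p) * r2)
  set B := n * z - n * p * z - n + p * r1 * z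
  have hA : 0 < A := by positivity
  have hcAB : c = (-B + √(B ^ 2 + 4 * A * r1)) / (2 * A) := by
    rw [hc, show D = B ^ 2 + 4 * A * r1 by rw [hD]; ring]
    congr 1 <;> ring
  obtain ⟨hc₀, hcq⟩ := quadratic_root_pos hA hr₁ hcAB
  have hb₀ : 0 < b0 := by rw [hb0]; positivity
  have ha₀ : 0 < a0 := ha0 ▸ mul_pos hc₀ hb₀
  have key : ∀ a b, 0 < a → 0 < b →
      (0 < v - 1 / a - 1 / b ∧ hamlingORSystem n V R p z a b ↔ a = a0 ∧ b = b0) := by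
    intro a b ha hb
    rw [hamlingORSystem_iff_of_forall_eq hV, ← hr1, ← hr2,
      hamlingOR_reduced_iff hp0 hp1 hz hr₁ ha hb, eq_mul_iff_of_quadratic hA hr₁ hc₀ hcq ha hb]
    constructor
    · rintro ⟨h, rfl⟩
      have hb := hb0 ▸ (hamlingOR_bilinear_mul_iff hv hp1 hc₀ hb).1 h
      exact ⟨by rw [ha0, hb], hb⟩
    · rintro ⟨rfl, rfl⟩
      exact ⟨ha0 ▸ (hamlingOR_bilinear_mul_iff hv hp1 hc₀ hb).2 hb0, ha0⟩
  obtain ⟨hS, hsys⟩ := (key a0 b0 ha₀ hb₀).2 ⟨rfl, rfl⟩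
  exact ⟨ha₀, hb₀, hS, hsys, fun a b ha hb hS hsys => (key a b ha hb).1 ⟨hS, hsys⟩⟩
end

section
/- For every integer n ≥ 1, every p ∈ (0,1), every z > 0, and all r1 > 0, r2 > 0, the two roots c₁ = (npz − nz + n − p·r1·z + √D)/(2z(np + (1−p)r2)) and c₂ = (npz − nz + n − p·r1·z − √D)/(2z(np + (1−p)r2)) satisfy c₂ < 0 < c₁; that is, exactly one of the two roots of the equivariant Hamling quadratic is positive. -/
/-- Of the two roots of the equivariant Hamling odds-ratio quadratic, exactly one is
positive: `c₂ < 0 < c₁`. -/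
theorem hamlingOR_roots_sign
    (n : ℕ) (hn : 1 ≤ n) (p z r1 r2 : ℝ)
    (hp0 : 0 < p) (hp1 : p < 1) (hz : 0 < z) (hr1 : 0 < r1) (hr2 : 0 < r2)
    (D c1 c2 : ℝ)
    (hD : D = (n : ℝ) ^ 2 * p ^ 2 * z ^ 2 - 2 * (n : ℝ) ^ 2 * p * z ^ 2
      + 2 * (n : ℝ) ^ 2 * p * z + (n : ℝ) ^ 2 * z ^ 2 - 2 * (n : ℝ) ^ 2 * z + (n : ℝ) ^ 2
      - 2 * (n : ℝ) * p ^ 2 * r1 * z ^ 2 + 2 * (n : ℝ) * p * r1 * z ^ 2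
      + 2 * (n : ℝ) * p * r1 * z + p ^ 2 * r1 ^ 2 * z ^ 2
      - 4 * p * r1 * r2 * z + 4 * r1 * r2 * z)
    (hc1 : c1 = ((n : ℝ) * p * z - (n : ℝ) * z + (n : ℝ) - p * r1 * z + Real.sqrt D)
      / (2 * z * ((n : ℝ) * p + (1 - p) * r2)))
    (hc2 : c2 = ((n : ℝ) * p * z - (n : ℝ) * z + (n : ℝ) - p * r1 * z - Real.sqrt D)
      / (2 * z * ((n : ℝ) * p + (1 - p) * r2))) :
    c2 < 0 ∧ 0 < c1 := by
  have hn1 : (1 : ℝ) ≤ (n : ℝ) := by exact_mod_cast hn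
  set B : ℝ := (n : ℝ) * p * z - (n : ℝ) * z + (n : ℝ) - p * r1 * z with hB
  set A : ℝ := (n : ℝ) * p + (1 - p) * r2 with hA
  have hApos : 0 < A := by
    have : 0 < (n : ℝ) * p := by positivity
    nlinarith
  have hden : 0 < 2 * z * A := by positivity
  have hDB : D - B ^ 2 = 4 * r1 * z * A := by rw [hD, hB, hA]; ring
  have hDpos : 0 < D := by nlinarith [sq_nonneg B]
  have hs := Real.sq_sqrt hDpos.le
  have hsnn := Real.sqrt_nonneg D
  have h1 : B < Real.sqrt D := by nlinarith [sq_nonneg (Real.sqrt D - B)]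
  have h2 : -Real.sqrt D < B := by nlinarith [sq_nonneg (Real.sqrt D + B)]
  constructor
  · rw [hc2]
    apply div_neg_of_neg_of_pos _ hden
    linarith
  · rw [hc1]
    apply div_pos _ hden
    linarith
end

section
/- For every integer n ≥ 1, every p ∈ (0,1), every z > 0, and all r1 > 0, r2 > 0, the equation (r1 + nc)(1 − pzc) = (1−p)zc(n + r2·c) has exactly one positive real solution c; equivalently, the quadratic z(np + (1−p)r2)c² + ((1−p)zn − n + pzr1)c − r1 = 0 has exactly one root c > 0. -/
lemma quad_unique_pos_root (A B C : ℝ) (hA : 0 < A) (hC : 0 < C) :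
    ∃! c : ℝ, 0 < c ∧ A * c ^ 2 + B * c - C = 0 := by
  set s := Real.sqrt (B ^ 2 + 4 * A * C) with hs
  have hD : 0 ≤ B ^ 2 + 4 * A * C := by positivity
  have hs2 : s ^ 2 = B ^ 2 + 4 * A * C := Real.sq_sqrt hD
  have hsB : |B| < s := by
    have : Real.sqrt (B ^ 2) < s := by
      apply Real.sqrt_lt_sqrt (by positivity)
      nlinarith
    simpa [Real.sqrt_sq_eq_abs] using this
  have hnum : 0 < s - B := by
    have := le_abs_self B; linarith
  refine ⟨(s - B) / (2 * A), ⟨div_pos hnum (by positivity), ?_⟩, ?_⟩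
  · field_simp
    nlinarith [hs2]
  · rintro y ⟨hy, hyroot⟩
    set c := (s - B) / (2 * A) with hc
    have hcpos : 0 < c := div_pos hnum (by positivity)
    have hcroot : A * c ^ 2 + B * c - C = 0 := by
      rw [hc]; field_simp; nlinarith [hs2]
    by_contra hne
    have hfac : (y - c) * (A * (y + c) + B) = 0 := by nlinarith
    rcases mul_eq_zero.mp hfac with h | h
    · exact hne (by linarith)
    · nlinarith [mul_pos hA (mul_pos hy hcpos)]

/-- The scalar equation for the ratio `c = a0/b0` of the equivariant Hamling odds-ratio
problem has exactly one positive real solution; equivalently, the corresponding quadratic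
has exactly one root `c > 0`. -/
theorem hamlingOR_ratio_unique_positive_root
    (n : ℕ) (hn : 1 ≤ n) (p z r1 r2 : ℝ)
    (hp0 : 0 < p) (hp1 : p < 1) (hz : 0 < z) (hr1 : 0 < r1) (hr2 : 0 < r2) :
    (∃! c : ℝ, 0 < c ∧
      (r1 + (n : ℝ) * c) * (1 - p * z * c) = (1 - p) * z * c * ((n : ℝ) + r2 * c)) ∧
    (∃! c : ℝ, 0 < c ∧
      z * ((n : ℝ) * p + (1 - p) * r2) * c ^ 2
        + ((1 - p) * z * (n : ℝ) - (n : ℝ) + p * z * r1) * c - r1 = 0) := by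
  have hn' : (1 : ℝ) ≤ (n : ℝ) := by exact_mod_cast hn
  have hA : 0 < z * ((n : ℝ) * p + (1 - p) * r2) := by
    have h1 : 0 < (n : ℝ) * p + (1 - p) * r2 := by
      nlinarith [mul_pos (sub_pos.mpr hp1) hr2, mul_nonneg (by linarith : (0:ℝ) ≤ (n:ℝ)-1) hp0.le]
    exact mul_pos hz h1
  have key := quad_unique_pos_root (z * ((n : ℝ) * p + (1 - p) * r2))
    ((1 - p) * z * (n : ℝ) - (n : ℝ) + p * z * r1) r1 hA hr1
  constructor
  · refine key.imp ?_
    intro c hc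
    constructor
    · exact ⟨hc.1.1, by nlinarith [hc.1.2]⟩
    · intro y hy
      exact hc.2 y ⟨hy.1, by nlinarith [hy.2]⟩
  · exact key
end

section
/- Suppose all Vᵢ equal a scalar v > 0 and that (a0, b0) with a0 > 0, b0 > 0 and v − 1/a0 − 1/b0 > 0 satisfies the Hamling odds-ratio system. Then the ratio c = a0/b0 satisfies (r1 + nc)(1 − pzc) = (1−p)zc(n + r2·c), where r1 = Σᵢ 1/Rᵢ and r2 = Σᵢ Rᵢ. -/
/-!
With equal variances every summand of both equations has the same denominator
`D = v - 1/a0 - 1/b0`, so the system collapses to two scalar equations in `n`, `r1`, `r2`.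
Cross-multiplying them eliminates `D`, and what remains is homogeneous in `(a0, b0)`,
hence an equation in `c = a0/b0` alone.
-/

open Finset

theorem sum_one_add_mul {ι : Type*} [Fintype ι] (t : ℝ) (f : ι → ℝ) :
    ∑ i, (1 + t * f i) = Fintype.card ι + t * ∑ i, f i := by
  rw [sum_add_distrib, ← mul_sum, sum_const, card_univ, nsmul_one]

theorem hamlingORSystem_iff_of_const {n : ℕ} {V : Fin n → ℝ} {v : ℝ} (hVv : ∀ i, V i = v)
    (R : Fin n → ℝ) (p z a0 b0 : ℝ) :
    hamlingORSystem n V R p z a0 b0 ↔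
      (1 - p) / p * b0 = (n + b0 / a0 * ∑ i, (R i)⁻¹) / (v - 1 / a0 - 1 / b0) ∧
      b0 / (z * p) - a0 = (n + a0 / b0 * ∑ i, R i) / (v - 1 / a0 - 1 / b0) := by
  simp only [hamlingORSystem, hVv, ← sum_div, div_mul_eq_div_div _ a0, div_eq_mul_inv (b0 / a0),
    mul_div_right_comm a0, sum_one_add_mul, Fintype.card_fin]

theorem ratio_equation_of_reduced_system {n r1 r2 p z a b D : ℝ} (ha : a ≠ 0) (hb : b ≠ 0)
    (hp : p ≠ 0) (hz : z ≠ 0) (hD : D ≠ 0)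
    (h1 : (1 - p) / p * b = (n + b / a * r1) / D)
    (h2 : b / (z * p) - a = (n + a / b * r2) / D) :
    (r1 + n * (a / b)) * (1 - p * z * (a / b)) = (1 - p) * z * (a / b) * (n + r2 * (a / b)) := by
  rw [eq_div_iff hD] at h1 h2
  have key : (n + b / a * r1) * (b / (z * p) - a) = (n + a / b * r2) * ((1 - p) / p * b) := by
    rw [← h1, ← h2]; ring
  field_simp at key ⊢
  linear_combination key

theorem hamlingOR_ratio_equation_general
    (n : ℕ) (V R : Fin n → ℝ)
    (v : ℝ) (hVv : ∀ i, V i = v)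
    (p z : ℝ) (hp0 : 0 < p) (hz : 0 < z)
    (a0 b0 : ℝ) (ha0 : 0 < a0) (hb0 : 0 < b0)
    (hden : 0 < v - 1 / a0 - 1 / b0)
    (hsol : hamlingORSystem n V R p z a0 b0)
    (r1 r2 c : ℝ) (hr1 : r1 = ∑ i, (R i)⁻¹) (hr2 : r2 = ∑ i, R i)
    (hc : c = a0 / b0) :
    (r1 + (n : ℝ) * c) * (1 - p * z * c) = (1 - p) * z * c * ((n : ℝ) + r2 * c) := by
  obtain ⟨h1, h2⟩ := (hamlingORSystem_iff_of_const hVv R p z a0 b0).mp hsol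
  subst hr1 hr2 hc
  exact ratio_equation_of_reduced_system ha0.ne' hb0.ne' hp0.ne' hz.ne' hden.ne' h1 h2

/-- In the equivariant case (all variances equal to `v > 0`), any positive feasible
solution `(a0, b0)` of the Hamling odds-ratio system has ratio `c = a0/b0` satisfying
`(r1 + nc)(1 − pzc) = (1−p)zc(n + r2 c)`. -/
theorem hamlingOR_ratio_equation
    (n : ℕ) (hn : 1 ≤ n) (V R : Fin n → ℝ) (hV : ∀ i, 0 < V i) (hR : ∀ i, 0 < R i)
    (v : ℝ) (hv : 0 < v) (hVv : ∀ i, V i = v)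
    (p z : ℝ) (hp0 : 0 < p) (hp1 : p < 1) (hz : 0 < z)
    (a0 b0 : ℝ) (ha0 : 0 < a0) (hb0 : 0 < b0)
    (hden : 0 < v - 1 / a0 - 1 / b0)
    (hsol : hamlingORSystem n V R p z a0 b0)
    (r1 r2 c : ℝ) (hr1 : r1 = ∑ i, (R i)⁻¹) (hr2 : r2 = ∑ i, R i)
    (hc : c = a0 / b0) :
    (r1 + (n : ℝ) * c) * (1 - p * z * c) = (1 - p) * z * c * ((n : ℝ) + r2 * c) :=
  hamlingOR_ratio_equation_general n V R v hVv p z hp0 hz a0 b0 ha0 hb0 hden hsol r1 r2 c hr1 hr2 hc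
end

section
/- For every integer n ≥ 1, all positive reported variances V₁,…,Vₙ, all positive reported odds ratios R₁,…,Rₙ, every p ∈ (0,1), and every z > 0, there exist a0 > 0 and b0 > 0 with Vᵢ − 1/a0 − 1/b0 > 0 for every i such that (a0, b0) satisfies the Hamling odds-ratio system. -/
open Finset

/-!
Substitute `u = 1/a0 + 1/b0` and `t = b0/a0`. For fixed `u ∈ [0, min Vᵢ)` the second equation
becomes a monic quadratic in `t` with negative constant term, so it has a unique positive root
`t(u)`, continuous in `u`. Substituting `t(u)` into the first equation gives a continuous function
of `u` that is negative at `u = 0` (because `p < 1`) and positive near `min Vᵢ`, where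
`u · ∑ 1/(Vᵢ - u)` and `u · ∑ 1/(Rᵢ (Vᵢ - u))` blow up; the intermediate value theorem gives `u`.
-/

open Filter Topology

noncomputable def posRoot (β γ : ℝ) : ℝ := (-β + √(β ^ 2 + 4 * γ)) / 2

lemma posRoot_pos {β γ : ℝ} (hγ : 0 < γ) : 0 < posRoot β γ := by
  have : |β| < √(β ^ 2 + 4 * γ) := by
    rw [← Real.sqrt_sq_eq_abs]
    exact Real.sqrt_lt_sqrt (sq_nonneg β) (by linarith)
  unfold posRoot
  linarith [le_abs_self β]

lemma posRoot_sq_add_mul (β : ℝ) {γ : ℝ} (hγ : 0 ≤ γ) :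
    posRoot β γ ^ 2 + β * posRoot β γ = γ := by
  have := Real.sq_sqrt (by positivity : 0 ≤ β ^ 2 + 4 * γ)
  unfold posRoot
  linear_combination this / 4

@[fun_prop]
lemma ContinuousOn.posRoot {f g : ℝ → ℝ} {s : Set ℝ} (hf : ContinuousOn f s)
    (hg : ContinuousOn g s) : ContinuousOn (fun x => posRoot (f x) (g x)) s := by
  unfold _root_.posRoot
  fun_prop

section poleSum

variable {ι : Type*} [Fintype ι] (V w : ι → ℝ)

noncomputable def poleSum (u : ℝ) : ℝ := ∑ i, w i / (V i - u)

variable {V w}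

lemma poleSum_nonneg (hw : ∀ i, 0 ≤ w i) {u : ℝ} (hu : ∀ i, u < V i) : 0 ≤ poleSum V w u :=
  sum_nonneg fun i _ => div_nonneg (hw i) (sub_pos.2 (hu i)).le

lemma continuousOn_poleSum {s : Set ℝ} (hs : ∀ u ∈ s, ∀ i, u < V i) :
    ContinuousOn (poleSum V w) s :=
  continuousOn_finsetSum _ fun i _ =>
    continuousOn_const.div (continuousOn_const.sub continuousOn_id)
      fun u hu => (sub_pos.2 (hs u hu i)).ne'

lemma tendsto_mul_poleSum_atTop {j : ι} (hj : ∀ i, V j ≤ V i) (hVj : 0 < V j)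
    (hw : ∀ i, 0 ≤ w i) (hwj : 0 < w j) :
    Tendsto (fun u => u * poleSum V w u) (𝓝[<] V j) atTop := by
  have hgap : Tendsto (fun u => V j - u) (𝓝[<] V j) (𝓝[>] 0) := by
    refine tendsto_nhdsWithin_iff.2
      ⟨?_, eventually_nhdsWithin_of_forall fun u hu => sub_pos.2 hu.out⟩
    have : Tendsto (fun u => V j - u) (𝓝 (V j)) (𝓝 (V j - V j)) :=
      tendsto_const_nhds.sub tendsto_id
    simpa using this.mono_left nhdsWithin_le_nhds
  have hterm : Tendsto (fun u => u * w j * (V j - u)⁻¹) (𝓝[<] V j) atTop :=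
    Tendsto.pos_mul_atTop (mul_pos hVj hwj)
      (((continuous_id.mul continuous_const).tendsto (V j)).mono_left nhdsWithin_le_nhds)
      hgap.inv_tendsto_nhdsGT_zero
  refine tendsto_atTop_mono' _ ?_ hterm
  filter_upwards [self_mem_nhdsWithin, nhdsWithin_le_nhds (Ioi_mem_nhds hVj)] with u hu hu0
  have huV : ∀ i, u < V i := fun i => hu.out.trans_le (hj i)
  calc u * w j * (V j - u)⁻¹ = u * (w j / (V j - u)) := by ring
    _ ≤ u * poleSum V w u := mul_le_mul_of_nonneg_left
        (single_le_sum (f := fun i => w i / (V i - u))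
          (fun i _ => div_nonneg (hw i) (sub_pos.2 (huV i)).le) (mem_univ j)) hu0.le

end poleSum

/-- The Hamling system in the variables `u = 1/a0 + 1/b0`, `t = b0/a0`, with `c = (1-p)/p` and
`κ = z p`; the second equation is multiplied through by `t u κ`. -/
lemma exists_hamlingOR_reduced_solution {ι : Type*} [Fintype ι] [Nonempty ι] {V R : ι → ℝ}
    (hV : ∀ i, 0 < V i) (hR : ∀ i, 0 < R i) {c κ : ℝ} (hc : 0 < c) (hκ : 0 < κ) :
    ∃ u t : ℝ, 0 < u ∧ (∀ i, u < V i) ∧ 0 < t ∧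
      c * (1 + t) = u * (poleSum V 1 u + t * poleSum V (fun i => 1 / R i) u) ∧
      t ^ 2 + (1 - κ - u * κ * poleSum V 1 u) * t = κ * (1 + u * poleSum V R u) := by
  set A := poleSum V 1
  set B := poleSum V fun i => 1 / R i
  set C := poleSum V R
  set T : ℝ → ℝ := fun u => posRoot (1 - κ - u * κ * A u) (κ * (1 + u * C u))
  set G : ℝ → ℝ := fun u => u * (A u + T u * B u) - c * (1 + T u)
  obtain ⟨j, -, hj⟩ := exists_min_image univ V univ_nonempty
  replace hj : ∀ i, V j ≤ V i := fun i => hj i (mem_univ i)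
  have hR' : ∀ i, 0 < 1 / R i := fun i => one_div_pos.2 (hR i)
  have hA_top := tendsto_mul_poleSum_atTop (w := 1) hj (hV j) (fun _ => zero_le_one) one_pos
  have hB_top := tendsto_mul_poleSum_atTop hj (hV j) (fun i => (hR' i).le) (hR' j)
  obtain ⟨u₁, ⟨⟨hcA, hcB⟩, hu₁V⟩, hu₁⟩ :=
    (((hA_top.eventually_gt_atTop c).and (hB_top.eventually_gt_atTop c)).and
      self_mem_nhdsWithin |>.and (nhdsWithin_le_nhds (Ioi_mem_nhds (hV j)))).exists
  have hIcc : ∀ u ∈ Set.Icc 0 u₁, ∀ i, u < V i := fun u hu i =>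
    hu.2.trans_lt (hu₁V.trans_le (hj i))
  have hγ : ∀ u ∈ Set.Icc 0 u₁, 0 < κ * (1 + u * C u) := fun u hu =>
    mul_pos hκ (by nlinarith [hu.1, poleSum_nonneg (fun i => (hR i).le) (hIcc u hu)])
  have hT : ∀ u ∈ Set.Icc 0 u₁, 0 < T u := fun u hu => posRoot_pos (hγ u hu)
  have hG : ContinuousOn G (Set.Icc 0 u₁) := by
    have hA : ContinuousOn A _ := continuousOn_poleSum hIcc
    have hB : ContinuousOn B _ := continuousOn_poleSum hIcc
    have hC : ContinuousOn C _ := continuousOn_poleSum hIcc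
    fun_prop
  have hG0 : G 0 < 0 := by
    have := hT 0 ⟨le_rfl, hu₁.le⟩
    simp only [G, zero_mul]
    nlinarith
  have hG1 : 0 < G u₁ := by
    have := mul_pos (hT u₁ ⟨hu₁.le, le_rfl⟩) (sub_pos.2 hcB)
    change c < u₁ * A u₁ at hcA
    simp only [G]
    nlinarith
  obtain ⟨u, hu, hGu⟩ := intermediate_value_Ioo hu₁.le hG ⟨hG0, hG1⟩
  have hu' : u ∈ Set.Icc 0 u₁ := Set.Ioo_subset_Icc_self hu
  refine ⟨u, T u, hu.1, hIcc u hu', hT u hu', by linarith [hGu], ?_⟩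
  exact posRoot_sq_add_mul _ (hγ u hu').le

lemma hamlingORSystem_iff {n : ℕ} {V R : Fin n → ℝ} {p z a0 b0 : ℝ} :
    hamlingORSystem n V R p z a0 b0 ↔
      (1 - p) / p * b0 = poleSum V 1 (1 / a0 + 1 / b0)
          + b0 / a0 * poleSum V (fun i => 1 / R i) (1 / a0 + 1 / b0) ∧
        b0 / (z * p) - a0 = poleSum V 1 (1 / a0 + 1 / b0)
          + a0 / b0 * poleSum V R (1 / a0 + 1 / b0) := by
  unfold hamlingORSystem poleSum
  simp_rw [mul_sum, ← sum_add_distrib, sub_sub]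
  refine and_congr (Eq.congr_right (sum_congr rfl fun i _ => ?_))
    (Eq.congr_right (sum_congr rfl fun i _ => ?_)) <;>
  · simp only [Pi.one_apply]
    ring

/-- For any positive reported variances and odds ratios, any `p ∈ (0,1)` and any `z > 0`,
the Hamling odds-ratio system has a positive feasible solution. -/
theorem hamlingOR_solution_exists
    (n : ℕ) (hn : 1 ≤ n) (V R : Fin n → ℝ) (hV : ∀ i, 0 < V i) (hR : ∀ i, 0 < R i)
    (p z : ℝ) (hp0 : 0 < p) (hp1 : p < 1) (hz : 0 < z) :
    ∃ a0 b0 : ℝ, 0 < a0 ∧ 0 < b0 ∧ (∀ i, 0 < V i - 1 / a0 - 1 / b0) ∧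
      hamlingORSystem n V R p z a0 b0 := by
  have : Nonempty (Fin n) := ⟨⟨0, hn⟩⟩
  obtain ⟨u, t, hu, huV, ht, h₁, h₂⟩ :=
    exists_hamlingOR_reduced_solution hV hR (div_pos (sub_pos.2 hp1) hp0) (mul_pos hz hp0)
  have hsum : 1 / ((1 + t) / (t * u)) + 1 / ((1 + t) / u) = u := by field_simp; ring
  refine ⟨(1 + t) / (t * u), (1 + t) / u, by positivity, by positivity, fun i => ?_, ?_⟩
  · rw [sub_sub, hsum]
    linarith [huV i]
  rw [hamlingORSystem_iff, hsum]
  generalize poleSum V 1 u = A at h₁ h₂ ⊢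
  generalize poleSum V (fun i => 1 / R i) u = B at h₁ ⊢
  generalize poleSum V R u = C at h₂ ⊢
  constructor
  · field_simp at h₁ ⊢
    linear_combination h₁
  · field_simp
    linear_combination h₂
end

section
/- For every integer n ≥ 1, all positive V₁,…,Vₙ, all positive R₁,…,Rₙ, every p ∈ (0,1), and every z > 0, there exist a0 > 0 and b0 > 0 with Vᵢ − 1/a0 − 1/b0 > 0 for all i such that f1(a0, b0) > 0 and f2(a0, b0) < 0. (Such a point is obtained by first taking b0 large enough that ((1−p)/p)b0 > Σᵢ 1/(Vᵢ − 1/b0), then letting a0 → ∞, along which f2(a0, b0) → −∞.) -/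
open Finset

/-- The Hamling residual function `f₁`. -/
noncomputable def hamlingF1 (n : ℕ) (V R : Fin n → ℝ) (p : ℝ) (a0 b0 : ℝ) : ℝ :=
  ((1 - p) / p) * b0 - ∑ i, (1 + b0 / (a0 * R i)) / (V i - 1 / a0 - 1 / b0)

/-- The Hamling residual function `f₂`. -/
noncomputable def hamlingF2 (n : ℕ) (V R : Fin n → ℝ) (p z : ℝ) (a0 b0 : ℝ) : ℝ :=
  b0 / (z * p) - a0 - ∑ i, (1 + a0 * R i / b0) / (V i - 1 / a0 - 1 / b0)

/-- There is a positive feasible point at which `f₁ > 0` and `f₂ < 0`. -/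
theorem hamlingOR_point_f1_pos_f2_neg
    (n : ℕ) (hn : 1 ≤ n) (V R : Fin n → ℝ) (hV : ∀ i, 0 < V i) (hR : ∀ i, 0 < R i)
    (p z : ℝ) (hp0 : 0 < p) (hp1 : p < 1) (hz : 0 < z) :
    ∃ a0 b0 : ℝ, 0 < a0 ∧ 0 < b0 ∧ (∀ i, 0 < V i - 1 / a0 - 1 / b0) ∧
      0 < hamlingF1 n V R p a0 b0 ∧ hamlingF2 n V R p z a0 b0 < 0 := by
  have hnpos : 0 < n := hn
  have hne : (Finset.univ : Finset (Fin n)).Nonempty := by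
    have : Nonempty (Fin n) := Fin.pos_iff_nonempty.mp hnpos
    exact Finset.univ_nonempty
  set m : ℝ := Finset.univ.inf' hne V with hmdef
  set r : ℝ := Finset.univ.inf' hne R with hrdef
  have hm : 0 < m := by
    rw [hmdef, Finset.lt_inf'_iff]
    intro i _; exact hV i
  have hr : 0 < r := by
    rw [hrdef, Finset.lt_inf'_iff]
    intro i _; exact hR i
  have hmV : ∀ i, m ≤ V i := fun i => Finset.inf'_le V (Finset.mem_univ i)
  have hrR : ∀ i, r ≤ R i := fun i => Finset.inf'_le R (Finset.mem_univ i)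
  have hp1' : 0 < 1 - p := by linarith
  set b0 : ℝ := max (4 / m) ((p / (1 - p)) * (4 * n / m + 1)) with hb0def
  have hb0pos : 0 < b0 := lt_of_lt_of_le (by positivity) (le_max_left _ _)
  set a0 : ℝ := max (4 / m) (max (b0 / r) (b0 / (z * p) + 1)) with ha0def
  have ha0pos : 0 < a0 := lt_of_lt_of_le (by positivity) (le_max_left _ _)
  have hinvb : 1 / b0 ≤ m / 4 := by
    have hle : 4 / m ≤ b0 := by rw [hb0def]; exact le_max_left _ _
    calc 1 / b0 ≤ 1 / (4 / m) :=
      one_div_le_one_div_of_le (by positivity) hle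
    _ = m / 4 := by field_simp
  have hinva : 1 / a0 ≤ m / 4 := by
    have hle : 4 / m ≤ a0 := by rw [ha0def]; exact le_max_left _ _
    calc 1 / a0 ≤ 1 / (4 / m) :=
      one_div_le_one_div_of_le (by positivity) hle
    _ = m / 4 := by field_simp
  have hD : ∀ i, m / 2 ≤ V i - 1 / a0 - 1 / b0 := by
    intro i
    have := hmV i
    linarith
  have hDpos : ∀ i, 0 < V i - 1 / a0 - 1 / b0 := fun i =>
    lt_of_lt_of_le (by linarith) (hD i)
  refine ⟨a0, b0, ha0pos, hb0pos, hDpos, ?_, ?_⟩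
  · -- f1 > 0
    have ha0r : b0 / r ≤ a0 := le_trans (le_max_left _ _) (le_max_right _ _)
    have hterm : ∀ i, (1 + b0 / (a0 * R i)) / (V i - 1 / a0 - 1 / b0) ≤ 4 / m := by
      intro i
      have haR : b0 ≤ a0 * R i := by
        have h1 : b0 / r * r ≤ a0 * r := mul_le_mul_of_nonneg_right ha0r hr.le
        have h2 : a0 * r ≤ a0 * R i := mul_le_mul_of_nonneg_left (hrR i) ha0pos.le
        have h3 : b0 / r * r = b0 := by field_simp
        linarith
      have hfrac : b0 / (a0 * R i) ≤ 1 := by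
        rw [div_le_one (mul_pos ha0pos (hR i))]; exact haR
      have hnum : 1 + b0 / (a0 * R i) ≤ 2 := by linarith
      calc (1 + b0 / (a0 * R i)) / (V i - 1 / a0 - 1 / b0)
          ≤ 2 / (m / 2) := div_le_div₀ (by norm_num) hnum (by positivity) (hD i)
        _ = 4 / m := by field_simp; ring
    have hsum : ∑ i, (1 + b0 / (a0 * R i)) / (V i - 1 / a0 - 1 / b0) ≤ 4 * n / m := by
      calc ∑ i, (1 + b0 / (a0 * R i)) / (V i - 1 / a0 - 1 / b0)
          ≤ ∑ _i : Fin n, 4 / m := Finset.sum_le_sum fun i _ => hterm i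
        _ = n * (4 / m) := by simp [Finset.sum_const, mul_comm]
        _ = 4 * n / m := by ring
    have hb0big : (1 - p) / p * b0 ≥ 4 * n / m + 1 := by
      have h := le_max_right (4 / m) ((p / (1 - p)) * (4 * n / m + 1))
      have := mul_le_mul_of_nonneg_left h (by positivity : (0:ℝ) ≤ (1 - p) / p)
      have heq : (1 - p) / p * ((p / (1 - p)) * (4 * n / m + 1)) = 4 * n / m + 1 := by
        field_simp
      linarith
    unfold hamlingF1
    linarith
  · -- f2 < 0
    have hsum : 0 ≤ ∑ i, (1 + a0 * R i / b0) / (V i - 1 / a0 - 1 / b0) := by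
      apply Finset.sum_nonneg
      intro i _
      have h1 : (0:ℝ) ≤ 1 + a0 * R i / b0 := by
        have : 0 ≤ a0 * R i / b0 := div_nonneg (mul_nonneg ha0pos.le (hR i).le) hb0pos.le
        linarith
      exact div_nonneg h1 (hDpos i).le
    have ha0big : b0 / (z * p) + 1 ≤ a0 :=
      le_trans (le_max_right _ _) (le_max_right _ _)
    unfold hamlingF2
    linarith
end

section
/- For every integer n ≥ 1, all positive V₁,…,Vₙ, all positive R₁,…,Rₙ, every p ∈ (0,1), and every z > 0, there exist a0 > 0 and b0 > 0 with Vᵢ − 1/a0 − 1/b0 > 0 for all i such that f1(a0, b0) < 0 and f2(a0, b0) > 0. (Such a point is obtained, for sufficiently small ε > 0, by taking b0 = 1/ε² and a0 = 1/(V_min − ε − ε²), where V_min = minᵢ Vᵢ.) -/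
/-!
Let `m = minᵢ Vᵢ` and take `b0 = 1/ε²`, `a0 = 1/(m - ε - ε²)`, so that every denominator
`Vᵢ - 1/a0 - 1/b0 = Vᵢ - m + ε` is at least `ε`, with equality at a minimising index `j`.
In `f1` that index alone contributes `b0 / (a0 R_j ε) ≈ m / (R_j ε³)`, which beats the
`O(1/ε²)` positive part, so `ε³ f1 → -m/R_j < 0`. In `f2` the sum is `O(1/ε)` and `a0 = O(1)`,
so `ε² f2 → 1/(zp) > 0`. Hence both signs are right for all small `ε > 0`.
-/

open Finset

open Filter Topology

section Bounds

variable {n : ℕ} {V R : Fin n → ℝ} {a0 b0 : ℝ}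

lemma hamlingF1_le (p : ℝ) (hR : ∀ i, 0 ≤ R i) (ha : 0 ≤ a0) (hb : 0 ≤ b0)
    (hD : ∀ i, 0 ≤ V i - 1 / a0 - 1 / b0) (j : Fin n) :
    hamlingF1 n V R p a0 b0 ≤
      (1 - p) / p * b0 - (1 + b0 / (a0 * R j)) / (V j - 1 / a0 - 1 / b0) := by
  have h_term (i : Fin n) : 0 ≤ (1 + b0 / (a0 * R i)) / (V i - 1 / a0 - 1 / b0) :=
    div_nonneg (by have := hR i; positivity) (hD i)
  exact sub_le_sub_left (single_le_sum (fun i _ => h_term i) (mem_univ j)) _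

lemma le_hamlingF2 (p z : ℝ) (hR : ∀ i, 0 ≤ R i) (ha : 0 ≤ a0) (hb : 0 ≤ b0) {δ : ℝ}
    (hδ : 0 < δ) (hD : ∀ i, δ ≤ V i - 1 / a0 - 1 / b0) :
    b0 / (z * p) - a0 - ∑ i, (1 + a0 * R i / b0) / δ ≤ hamlingF2 n V R p z a0 b0 := by
  have h_term (i : Fin n) :
      (1 + a0 * R i / b0) / (V i - 1 / a0 - 1 / b0) ≤ (1 + a0 * R i / b0) / δ :=
    div_le_div_of_nonneg_left (by have := hR i; positivity) hδ (hD i)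
  exact sub_le_sub_left (sum_le_sum fun i _ => h_term i) _

end Bounds

section HamlingPoint

variable {n : ℕ} {V R : Fin n → ℝ} {m ε : ℝ}

lemma hamling_point_denom_eq (i : Fin n) :
    V i - 1 / (1 / (m - ε - ε ^ 2)) - 1 / (1 / ε ^ 2) = V i - m + ε := by
  rw [one_div_one_div, one_div_one_div]
  ring

lemma le_hamling_point_denom (hV : ∀ i, m ≤ V i) (i : Fin n) :
    ε ≤ V i - 1 / (1 / (m - ε - ε ^ 2)) - 1 / (1 / ε ^ 2) := by
  rw [hamling_point_denom_eq]
  linarith [hV i]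

lemma cube_mul_hamlingF1_point_le (p : ℝ) (hV : ∀ i, m ≤ V i) (hR : ∀ i, 0 < R i) (hε : 0 < ε)
    (hεm : ε + ε ^ 2 < m) {j : Fin n} (hj : V j = m) :
    ε ^ 3 * hamlingF1 n V R p (1 / (m - ε - ε ^ 2)) (1 / ε ^ 2) ≤
      (1 - p) / p * ε - ε ^ 2 - (m - ε - ε ^ 2) / R j := by
  have hu : 0 < m - ε - ε ^ 2 := by linarith
  have hRj := hR j
  calc ε ^ 3 * hamlingF1 n V R p (1 / (m - ε - ε ^ 2)) (1 / ε ^ 2)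
      ≤ ε ^ 3 * ((1 - p) / p * (1 / ε ^ 2) -
          (1 + 1 / ε ^ 2 / (1 / (m - ε - ε ^ 2) * R j)) / (V j - m + ε)) := by
        rw [← hamling_point_denom_eq]
        gcongr
        exact hamlingF1_le p (fun i => (hR i).le) (by positivity) (by positivity)
          (fun i => hε.le.trans (le_hamling_point_denom hV i)) j
    _ = (1 - p) / p * ε - ε ^ 2 - (m - ε - ε ^ 2) / R j := by
        rw [hj, sub_self, zero_add]
        field_simp
        ring

lemma le_sq_mul_hamlingF2_point (p z : ℝ) (hV : ∀ i, m ≤ V i) (hR : ∀ i, 0 < R i) (hε : 0 < ε)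
    (hεm : ε + ε ^ 2 < m) :
    1 / (z * p) - ε ^ 2 / (m - ε - ε ^ 2) - ε * ∑ i, (1 + R i * ε ^ 2 / (m - ε - ε ^ 2)) ≤
      ε ^ 2 * hamlingF2 n V R p z (1 / (m - ε - ε ^ 2)) (1 / ε ^ 2) := by
  have hu : 0 < m - ε - ε ^ 2 := by linarith
  calc 1 / (z * p) - ε ^ 2 / (m - ε - ε ^ 2) - ε * ∑ i, (1 + R i * ε ^ 2 / (m - ε - ε ^ 2))
      = ε ^ 2 * (1 / ε ^ 2 / (z * p) - 1 / (m - ε - ε ^ 2) -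
          ∑ i, (1 + 1 / (m - ε - ε ^ 2) * R i / (1 / ε ^ 2)) / ε) := by
        rw [mul_sum, mul_sub, mul_sub, mul_sum]
        congr 1
        · field_simp
        · refine sum_congr rfl fun i _ => ?_
          field_simp
    _ ≤ ε ^ 2 * hamlingF2 n V R p z (1 / (m - ε - ε ^ 2)) (1 / ε ^ 2) := by
        gcongr
        exact le_hamlingF2 p z (fun i => (hR i).le) (by positivity) (by positivity) hε (le_hamling_point_denom hV)

lemma eventually_hamling_point_admissible (hm : 0 < m) :
    ∀ᶠ ε in 𝓝[>] (0 : ℝ), 0 < ε ∧ ε + ε ^ 2 < m := by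
  have h_small : ∀ᶠ ε in 𝓝 (0 : ℝ), ε + ε ^ 2 < m :=
    (by fun_prop : Continuous fun ε : ℝ => ε + ε ^ 2).continuousAt.eventually_lt
      continuousAt_const (by simpa using hm)
  exact eventually_mem_nhdsWithin.and (nhdsWithin_le_nhds h_small)

lemma eventually_hamlingF1_point_neg (p : ℝ) (hm : 0 < m) (hV : ∀ i, m ≤ V i)
    (hR : ∀ i, 0 < R i) {j : Fin n} (hj : V j = m) :
    ∀ᶠ ε in 𝓝[>] (0 : ℝ), hamlingF1 n V R p (1 / (m - ε - ε ^ 2)) (1 / ε ^ 2) < 0 := by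
  have h_lim : ∀ᶠ ε in 𝓝 (0 : ℝ), (1 - p) / p * ε - ε ^ 2 - (m - ε - ε ^ 2) / R j < 0 :=
    (by fun_prop : Continuous fun ε : ℝ => (1 - p) / p * ε - ε ^ 2 - (m - ε - ε ^ 2) / R j)
      |>.continuousAt.eventually_lt continuousAt_const (by simpa using div_pos hm (hR j))
  filter_upwards [eventually_hamling_point_admissible hm, nhdsWithin_le_nhds h_lim]
    with ε ⟨hε, hεm⟩ h_neg
  exact neg_of_mul_neg_right ((cube_mul_hamlingF1_point_le p hV hR hε hεm hj).trans_lt h_neg)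
    (by positivity)

lemma eventually_hamlingF2_point_pos (p z : ℝ) (hpz : 0 < z * p) (hm : 0 < m)
    (hV : ∀ i, m ≤ V i) (hR : ∀ i, 0 < R i) :
    ∀ᶠ ε in 𝓝[>] (0 : ℝ), 0 < hamlingF2 n V R p z (1 / (m - ε - ε ^ 2)) (1 / ε ^ 2) := by
  have h_lim : ∀ᶠ ε in 𝓝 (0 : ℝ), 0 < 1 / (z * p) - ε ^ 2 / (m - ε - ε ^ 2) -
      ε * ∑ i, (1 + R i * ε ^ 2 / (m - ε - ε ^ 2)) := by
    refine continuousAt_const.eventually_lt (by fun_prop (disch := simp [hm.ne'])) ?_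
    simpa using one_div_pos.mpr hpz
  filter_upwards [eventually_hamling_point_admissible hm, nhdsWithin_le_nhds h_lim]
    with ε ⟨hε, hεm⟩ h_pos
  exact pos_of_mul_pos_right (h_pos.trans_le (le_sq_mul_hamlingF2_point p z hV hR hε hεm))
    (by positivity)

end HamlingPoint

theorem hamlingOR_point_f1_neg_f2_pos_general
    (n : ℕ) (hn : 1 ≤ n) (V R : Fin n → ℝ) (hV : ∀ i, 0 < V i) (hR : ∀ i, 0 < R i)
    (p z : ℝ) (hp0 : 0 < p) (hz : 0 < z) :
    ∃ a0 b0 : ℝ, 0 < a0 ∧ 0 < b0 ∧ (∀ i, 0 < V i - 1 / a0 - 1 / b0) ∧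
      hamlingF1 n V R p a0 b0 < 0 ∧ 0 < hamlingF2 n V R p z a0 b0 := by
  obtain ⟨j, -, hj⟩ := exists_min_image univ V ⟨⟨0, hn⟩, mem_univ _⟩
  have hmin (i : Fin n) : V j ≤ V i := hj i (mem_univ i)
  obtain ⟨ε, ⟨hε, hεm⟩, h_f1, h_f2⟩ := (eventually_hamling_point_admissible (hV j)
    |>.and <| (eventually_hamlingF1_point_neg p (hV j) hmin hR rfl).and
      (eventually_hamlingF2_point_pos p z (mul_pos hz hp0) (hV j) hmin hR)).exists
  exact ⟨1 / (V j - ε - ε ^ 2), 1 / ε ^ 2, one_div_pos.mpr (by linarith), by positivity,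
    fun i => hε.trans_le (le_hamling_point_denom hmin i), h_f1, h_f2⟩

/-- There is a positive feasible point at which `f₁ < 0` and `f₂ > 0`. -/
theorem hamlingOR_point_f1_neg_f2_pos
    (n : ℕ) (hn : 1 ≤ n) (V R : Fin n → ℝ) (hV : ∀ i, 0 < V i) (hR : ∀ i, 0 < R i)
    (p z : ℝ) (hp0 : 0 < p) (hp1 : p < 1) (hz : 0 < z) :
    ∃ a0 b0 : ℝ, 0 < a0 ∧ 0 < b0 ∧ (∀ i, 0 < V i - 1 / a0 - 1 / b0) ∧
      hamlingF1 n V R p a0 b0 < 0 ∧ 0 < hamlingF2 n V R p z a0 b0 :=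
  hamlingOR_point_f1_neg_f2_pos_general n hn V R hV hR p z hp0 hz
end

section
/- Let p ∈ (0,1), z > 0, r1 > 0, r2 > 0, and suppose (1−p)z ≥ 1 and p²·r1·z ≥ 4·r2·(1 − p). Then for every real n ≥ 0 the relative-risk Hamling discriminant satisfies D_RR ≥ 0, since D_RR = n²(pz − z − 1)² + n·2zp·r1·(z − pz − 1) + (r1²z²p² + 4r1r2z(p − 1)) is a sum of three nonnegative terms under these hypotheses. -/
/-- Under the sufficient conditions `(1−p)z ≥ 1` and `p²·r₁·z ≥ 4·r₂·(1−p)`, the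
relative-risk Hamling discriminant is nonnegative for every real `n ≥ 0`, being a sum of
three nonnegative terms via the expansion
`D_RR = n²(pz−z−1)² + n·2zp·r₁·(z−pz−1) + (r₁²z²p² + 4r₁r₂z(p−1))`. -/
theorem hamlingRR_discriminant_nonneg
    (p z r1 r2 : ℝ) (hp0 : 0 < p) (hp1 : p < 1) (hz : 0 < z) (hr1 : 0 < r1) (hr2 : 0 < r2)
    (h1 : 1 ≤ (1 - p) * z) (h2 : 4 * r2 * (1 - p) ≤ p ^ 2 * r1 * z)
    (n : ℝ) (hn : 0 ≤ n) :
    (n * (p * z - z - 1) - r1 * z * p) ^ 2 - 4 * r1 * (n * z * p + r2 * z - r2 * p * z)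
        = n ^ 2 * (p * z - z - 1) ^ 2 + n * (2 * z * p * r1 * (z - p * z - 1))
          + (r1 ^ 2 * z ^ 2 * p ^ 2 + 4 * r1 * r2 * z * (p - 1)) ∧
    0 ≤ (n * (p * z - z - 1) - r1 * z * p) ^ 2
        - 4 * r1 * (n * z * p + r2 * z - r2 * p * z) := by
  constructor
  · ring
  · have t1 : 0 ≤ n ^ 2 * (p * z - z - 1) ^ 2 := by positivity
    have t2 : 0 ≤ n * (2 * z * p * r1 * (z - p * z - 1)) := by
      apply mul_nonneg hn
      have : 0 ≤ z - p * z - 1 := by nlinarith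
      positivity
    have key := mul_le_mul_of_nonneg_left h2 (by positivity : (0:ℝ) ≤ r1 * z)
    have t3 : 0 ≤ r1 ^ 2 * z ^ 2 * p ^ 2 + 4 * r1 * r2 * z * (p - 1) := by nlinarith
    nlinarith [t1, t2, t3]
end
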